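/- For r = 2, the unique formal series a(z) = 1 + Σ a_k z^{-3k} solving S_z^2 a = z^2 a has initial coefficients a_1 = −5/24, a_2 = 385/1152, a_3 = −85085/82944. -/

import Mathlib

open HahnSeries Pointwise

/-- The operator `S_z = z^{1-r} ∂_z - (r-1)/(2 z^r) - z` acting on formal Laurent
series with finitely many positive powers of `z`, written in the variable
`t = z⁻¹` (so `coeff m` is the coefficient of `z^{-m}`). -/
noncomputable def Sop (r : ℕ) (f : LaurentSeries ℂ) : LaurentSeries ℂ where
  coeff m := ((r + 1 : ℂ) / 2 - m) * f.coeff (m - r) - f.coeff (m + 1)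
  isPWO_support' := by
    have h : (Function.support fun m : ℤ =>
        ((r + 1 : ℂ) / 2 - m) * f.coeff (m - r) - f.coeff (m + 1))
        ⊆ (f.support + {(r : ℤ)}) ∪ (f.support + ({(-1 : ℤ)} : Set ℤ)) := by
      intro m hm
      simp only [Function.mem_support] at hm
      by_cases h1 : f.coeff (m - (r : ℤ)) = 0
      · have h2 : f.coeff (m + 1) ≠ 0 := fun h2 => hm (by rw [h1, h2]; ring)
        right
        exact Set.mem_add.mpr ⟨m + 1, by simpa using h2, -1, rfl, by ring⟩
      · left
        exact Set.mem_add.mpr ⟨m - r, by simpa using h1, r, rfl, by ring⟩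
    exact ((f.isPWO_support.add (Set.isPWO_singleton (r : ℤ))).union
      (f.isPWO_support.add (Set.isPWO_singleton (-1 : ℤ)))).mono h

/-- The formal adjoint `S_z^⋆ = -z^{1-r} ∂_z + (r-1)/(2 z^r) - z`. -/
noncomputable def Sstar (r : ℕ) (f : LaurentSeries ℂ) : LaurentSeries ℂ where
  coeff m := ((m : ℂ) - (r + 1) / 2) * f.coeff (m - r) - f.coeff (m + 1)
  isPWO_support' := by
    have h : (Function.support fun m : ℤ =>
        ((m : ℂ) - (r + 1) / 2) * f.coeff (m - r) - f.coeff (m + 1))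
        ⊆ (f.support + {(r : ℤ)}) ∪ (f.support + ({(-1 : ℤ)} : Set ℤ)) := by
      intro m hm
      simp only [Function.mem_support] at hm
      by_cases h1 : f.coeff (m - (r : ℤ)) = 0
      · have h2 : f.coeff (m + 1) ≠ 0 := fun h2 => hm (by rw [h1, h2]; ring)
        right
        exact Set.mem_add.mpr ⟨m + 1, by simpa using h2, -1, rfl, by ring⟩
      · left
        exact Set.mem_add.mpr ⟨m - r, by simpa using h1, r, rfl, by ring⟩
    exact ((f.isPWO_support.add (Set.isPWO_singleton (r : ℤ))).union
      (f.isPWO_support.add (Set.isPWO_singleton (-1 : ℤ)))).mono h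

/-- Substitution `z ↦ ω z` on a formal Laurent series (`coeff m` is the
coefficient of `z^{-m}`, which gets multiplied by `ω^{-m}`). -/
noncomputable def rot (ω : ℂ) (f : LaurentSeries ℂ) : LaurentSeries ℂ where
  coeff m := ω ^ (-m) * f.coeff m
  isPWO_support' := f.isPWO_support.mono (fun m hm => by
    simp only [Function.mem_support] at hm ⊢
    exact fun h => hm (by rw [h, mul_zero]))

/-! Comparing coefficients of `z^{-m}` in `S_z² a = z² a` gives a two-term recurrence: the `z² a`
on the right cancels the `z² a` produced by the two `-z` parts of `S_z`. For `r = 2` it reads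
`a_{k+1} = -(6k+5)(6k+1) / (24(k+1)) · a_k`, and `a_0 = 1` determines everything. -/

theorem Sop_coeff (r : ℕ) (f : LaurentSeries ℂ) (m : ℤ) :
    (Sop r f).coeff m = ((r + 1 : ℂ) / 2 - m) * f.coeff (m - r) - f.coeff (m + 1) :=
  rfl

theorem coeff_single_neg_mul {R : Type*} [Semiring R] (n m : ℤ) (c : R) (f : LaurentSeries R) :
    (single (-n) c * f).coeff m = c * f.coeff (m + n) := by
  rw [show m = m + n + -n by ring, coeff_single_mul_add, add_neg_cancel_right]

theorem coeff_recurrence_of_Sop_sq_eq (r : ℕ) {a : LaurentSeries ℂ}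
    (h : (Sop r)^[2] a = single (-2 : ℤ) 1 * a) (m : ℤ) :
    ((r + 1 : ℂ) / 2 - m) * ((3 * r + 1) / 2 - m) * a.coeff (m - 2 * r)
      = (r - 2 * m) * a.coeff (m + 1 - r) := by
  have hm := congrArg (coeff · m) h
  simp only [Function.iterate_succ, Function.iterate_zero, Function.comp_apply, id_eq,
    Sop_coeff, coeff_single_neg_mul, one_mul] at hm
  rw [show m - r - r = m - 2 * r by ring, show m - r + 1 = m + 1 - r by ring,
    show m + 1 + 1 = m + 2 by ring] at hm
  push_cast at hm
  linear_combination hm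

theorem coeff_three_mul_succ_of_Sop_two_sq_eq {a : LaurentSeries ℂ}
    (h : (Sop 2)^[2] a = single (-2 : ℤ) 1 * a) (k : ℕ) :
    a.coeff (3 * (k + 1)) = -((6 * k + 5) * (6 * k + 1)) / (24 * (k + 1)) * a.coeff (3 * k) := by
  have hk := coeff_recurrence_of_Sop_sq_eq 2 h (3 * k + 4)
  rw [show (3 * k + 4 : ℤ) - 2 * (2 : ℕ) = 3 * k by push_cast; ring,
    show (3 * k + 4 : ℤ) + 1 - (2 : ℕ) = 3 * (k + 1) by push_cast; ring] at hk
  push_cast at hk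
  field_simp
  linear_combination 4 * hk

theorem a_coeffs_r_two_general (a : LaurentSeries ℂ)
    (ha0 : a.coeff 0 = 1)
    (hode : (Sop 2)^[2] a = HahnSeries.single (-2 : ℤ) 1 * a) :
    a.coeff 3 = -5/24 ∧ a.coeff 6 = 385/1152 ∧ a.coeff 9 = -85085/82944 := by
  have step := coeff_three_mul_succ_of_Sop_two_sq_eq hode
  have a1 : a.coeff 3 = -5/24 := by simpa [ha0] using step 0
  have a2 : a.coeff 6 = 385/1152 := by
    have h1 := step 1
    norm_num [a1] at h1
    linear_combination h1
  have a3 : a.coeff 9 = -85085/82944 := by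
    have h2 := step 2
    norm_num [a2] at h2
    linear_combination h2
  exact ⟨a1, a2, a3⟩

/-- For `r = 2`: the unique formal series `a(z) = 1 + Σ a_k z^{-3k}` solving
`S_z^2 a = z^2 a` has `a_1 = -5/24`, `a_2 = 385/1152`, `a_3 = -85085/82944`.
(`coeff (3k)` is the coefficient `a_k` of `z^{-3k}`; `z^2 = single (-2) 1`.) -/
theorem a_coeffs_r_two (a : LaurentSeries ℂ)
    (ha0 : a.coeff 0 = 1)
    (hsupp : ∀ m : ℤ, a.coeff m ≠ 0 → ∃ k : ℕ, m = 3 * k)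
    (hode : (Sop 2)^[2] a = HahnSeries.single (-2 : ℤ) 1 * a) :
    a.coeff 3 = -5/24 ∧ a.coeff 6 = 385/1152 ∧ a.coeff 9 = -85085/82944 :=
  a_coeffs_r_two_general a ha0 hode
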